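/- arXiv:1102.3673 — 2 statements merged into one kernel-verified Lean document; each statement's English description precedes it below -/
import Mathlib

section
/- In the plane, let ℓ be a line tangent to a circle of center p' and radius R = ‖p' - m'‖ at the point m'. A point q' on the same side of ℓ as p' lies strictly inside the circle if and only if ‖p' - m'‖ > ‖q' - m'‖² / (2 d(q', ℓ)). -/
/-! With `n = p' - m'` and `v = q' - m'`, the distance from `q'` to the tangent line is
`⟪n, v⟫ / ‖n‖`, while `‖v - n‖ < ‖n‖` expands to `‖v‖² < 2 ⟪n, v⟫ = 2 ‖n‖ d(q', ℓ)`. -/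

open Metric RealInnerProductSpace

section InnerProductGeometry

variable {E : Type*} [NormedAddCommGroup E] [InnerProductSpace ℝ E]

theorem infDist_setOf_inner_sub_eq_zero (n m q : E) (hn : n ≠ 0) :
    infDist q {x | ⟪n, x - m⟫ = 0} = |⟪n, q - m⟫| / ‖n‖ := by
  have hnorm : 0 < ‖n‖ := norm_pos_iff.mpr hn
  apply le_antisymm
  · -- the foot of the perpendicular from `q`
    set c := ⟪n, q - m⟫ / ‖n‖ ^ 2
    have hfoot : q - c • n ∈ {x | ⟪n, x - m⟫ = 0} := by
      simp only [Set.mem_ofPred_eq, inner_sub_right, inner_smul_right,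
        real_inner_self_eq_norm_sq, c]
      field_simp
      ring
    calc infDist q _ ≤ dist q (q - c • n) := infDist_le_dist_of_mem hfoot
      _ = |c| * ‖n‖ := by rw [dist_eq_norm, sub_sub_cancel, norm_smul, Real.norm_eq_abs]
      _ = |⟪n, q - m⟫| / ‖n‖ := by
        rw [abs_div, abs_of_pos (pow_pos hnorm 2)]
        field_simp
  · refine (le_infDist ⟨m, by simp⟩).mpr fun y hy => ?_
    have hinner : ⟪n, q - m⟫ = ⟪n, q - y⟫ := by
      have : q - m = (q - y) + (y - m) := by abel
      rw [this, inner_add_right, show ⟪n, y - m⟫ = 0 from hy, add_zero]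
    rw [div_le_iff₀ hnorm, hinner, dist_eq_norm, mul_comm]
    exact abs_real_inner_le_norm n (q - y)

theorem norm_sub_lt_norm_iff_sq_lt_two_inner (n v : E) :
    ‖v - n‖ < ‖n‖ ↔ ‖v‖ ^ 2 < 2 * ⟪n, v⟫ := by
  rw [← sq_lt_sq₀ (norm_nonneg _) (norm_nonneg _), norm_sub_sq_real, real_inner_comm]
  constructor <;> intro h <;> linarith

end InnerProductGeometry

theorem stmt_11_general (p' m' q' : EuclideanSpace ℝ (Fin 2))
    (R : ℝ) (hR : R = ‖p' - m'‖)
    (L : Set (EuclideanSpace ℝ (Fin 2)))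
    (hL : L = {x : EuclideanSpace ℝ (Fin 2) | inner ℝ (p' - m') (x - m') = (0 : ℝ)})
    (hside : (0 : ℝ) < inner ℝ (p' - m') (q' - m')) :
    ‖q' - p'‖ < R ↔ ‖q' - m'‖ ^ 2 / (2 * Metric.infDist q' L) < ‖p' - m'‖ := by
  have hn : p' - m' ≠ 0 := fun h => by simp [h] at hside
  have hdist : infDist q' L = ⟪p' - m', q' - m'⟫ / ‖p' - m'‖ := by
    rw [hL, infDist_setOf_inner_sub_eq_zero _ _ _ hn, abs_of_pos hside]
  have hqp : q' - p' = (q' - m') - (p' - m') := by abel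
  rw [hR, hqp, norm_sub_lt_norm_iff_sq_lt_two_inner, hdist,
    div_lt_iff₀ (by positivity)]
  field_simp

theorem stmt_11 (p' m' q' : EuclideanSpace ℝ (Fin 2))
    (R : ℝ) (hR : R = ‖p' - m'‖) (hRpos : 0 < R)
    (L : Set (EuclideanSpace ℝ (Fin 2)))
    (hL : L = {x : EuclideanSpace ℝ (Fin 2) | inner ℝ (p' - m') (x - m') = (0 : ℝ)})
    (hside : (0 : ℝ) < inner ℝ (p' - m') (q' - m'))
    (hq : 0 < Metric.infDist q' L) :
    ‖q' - p'‖ < R ↔ ‖q' - m'‖ ^ 2 / (2 * Metric.infDist q' L) < ‖p' - m'‖ :=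
  stmt_11_general p' m' q' R hR L hL hside
end

section
/- If all sites in a finite set V ⊆ ℝ² are collinear, then no point of ℝ² is equidistant (in the anisotropic distance D(v,p) = ((p-v)ᵀ Q_p (p-v))^{1/2}) to three distinct sites. -/
open Matrix

noncomputable def aniDist (Q : EuclideanSpace ℝ (Fin 2) → Matrix (Fin 2) (Fin 2) ℝ)
    (v p : EuclideanSpace ℝ (Fin 2)) : ℝ :=
  Real.sqrt ((p - v) ⬝ᵥ (Q p) *ᵥ (p - v))

/-! Sites equidistant from `p` lie on one level set of the positive definite quadratic form
`x ↦ xᵀ Q_p x` centred at `p`. Along a line `t ↦ t • d + v` such a form is a quadratic polynomial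
in `t` with leading coefficient `dᵀ Q_p d ≠ 0`, so it takes each value at most twice. -/

theorem eq_or_eq_or_eq_of_quadratic_eq {R : Type*} [CommRing R] [IsDomain R]
    {a b c t₁ t₂ t₃ : R} (ha : a ≠ 0)
    (h₁₂ : a * t₁ ^ 2 + b * t₁ + c = a * t₂ ^ 2 + b * t₂ + c)
    (h₂₃ : a * t₂ ^ 2 + b * t₂ + c = a * t₃ ^ 2 + b * t₃ + c) :
    t₁ = t₂ ∨ t₁ = t₃ ∨ t₂ = t₃ := by
  by_contra! ⟨ht₁₂, ht₁₃, ht₂₃⟩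
  have k₁₂ : a * (t₁ + t₂) + b = 0 :=
    (mul_eq_zero.mp (by linear_combination h₁₂ : (t₁ - t₂) * (a * (t₁ + t₂) + b) = 0)).resolve_left
      (sub_ne_zero.mpr ht₁₂)
  have k₂₃ : a * (t₂ + t₃) + b = 0 :=
    (mul_eq_zero.mp (by linear_combination h₂₃ : (t₂ - t₃) * (a * (t₂ + t₃) + b) = 0)).resolve_left
      (sub_ne_zero.mpr ht₂₃)
  have k₁₃ : a * (t₁ - t₃) = 0 := by linear_combination k₁₂ - k₂₃
  exact mul_ne_zero ha (sub_ne_zero.mpr ht₁₃) k₁₃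

namespace QuadraticMap

variable {R M : Type*} [CommRing R] [AddCommGroup M] [Module R M]

theorem map_smul_add (Q : QuadraticForm R M) (t : R) (d u : M) :
    Q (t • d + u) = Q d * t ^ 2 + polar Q d u * t + Q u := by
  rw [QuadraticMap.map_add (⇑Q), QuadraticMap.map_smul, polar_smul_left, smul_eq_mul, smul_eq_mul]
  ring

variable {K V P : Type*} [Field K] [AddCommGroup V] [Module K V] [AddTorsor V P]

theorem Anisotropic.eq_or_eq_or_eq_of_collinear {Q : QuadraticForm K V} (hQ : Q.Anisotropic)
    {p v₁ v₂ v₃ : P} (hcol : Collinear K {v₁, v₂, v₃})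
    (h₁₂ : Q (v₁ -ᵥ p) = Q (v₂ -ᵥ p)) (h₂₃ : Q (v₂ -ᵥ p) = Q (v₃ -ᵥ p)) :
    v₁ = v₂ ∨ v₁ = v₃ ∨ v₂ = v₃ := by
  obtain ⟨d, hd⟩ := (collinear_iff_of_mem (Set.mem_insert v₁ _)).mp hcol
  obtain ⟨t₂, rfl⟩ := hd v₂ (by simp)
  obtain ⟨t₃, rfl⟩ := hd v₃ (by simp)
  rcases eq_or_ne d 0 with rfl | hd0
  · simp
  have hline (t : K) :
      Q ((t • d +ᵥ v₁) -ᵥ p) = Q d * t ^ 2 + polar Q d (v₁ -ᵥ p) * t + Q (v₁ -ᵥ p) := by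
    rw [vadd_vsub_assoc, map_smul_add]
  have h₀ : Q (v₁ -ᵥ p) = Q (((0 : K) • d +ᵥ v₁) -ᵥ p) := by simp
  rw [h₀, hline, hline] at h₁₂
  rw [hline, hline] at h₂₃
  rcases eq_or_eq_or_eq_of_quadratic_eq (mt (hQ d) hd0) h₁₂ h₂₃ with h | h | h <;> simp [← h]

end QuadraticMap

theorem aniDist_eq_sqrt (Q : EuclideanSpace ℝ (Fin 2) → Matrix (Fin 2) (Fin 2) ℝ)
    (v p : EuclideanSpace ℝ (Fin 2)) :
    aniDist Q v p =
      √((Q p).toQuadraticForm'.comp (WithLp.linearEquiv 2 ℝ (Fin 2 → ℝ)).toLinearMap (v - p)) := by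
  rw [QuadraticMap.map_sub]
  simp [aniDist, toQuadraticForm', toLinearMap₂'_apply']

theorem stmt_12 (V : Finset (EuclideanSpace ℝ (Fin 2)))
    (hcol : Collinear ℝ (V : Set (EuclideanSpace ℝ (Fin 2))))
    (Q : EuclideanSpace ℝ (Fin 2) → Matrix (Fin 2) (Fin 2) ℝ)
    (hQ : ∀ p, (Q p).PosDef)
    (v₁ v₂ v₃ : EuclideanSpace ℝ (Fin 2)) (h₁ : v₁ ∈ V) (h₂ : v₂ ∈ V) (h₃ : v₃ ∈ V)
    (h12 : v₁ ≠ v₂) (h13 : v₁ ≠ v₃) (h23 : v₂ ≠ v₃) :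
    ¬ ∃ p, aniDist Q v₁ p = aniDist Q v₂ p ∧ aniDist Q v₂ p = aniDist Q v₃ p := by
  rintro ⟨p, hd₁₂, hd₂₃⟩
  simp only [aniDist_eq_sqrt] at hd₁₂ hd₂₃
  set q := (Q p).toQuadraticForm'.comp (WithLp.linearEquiv 2 ℝ (Fin 2 → ℝ)).toLinearMap
  have hq : q.PosDef := fun x hx ↦ (hQ p).toQuadraticForm' _ (by simpa using hx)
  rw [Real.sqrt_inj (hq.nonneg _) (hq.nonneg _)] at hd₁₂ hd₂₃
  have hcol₃ : Collinear ℝ {v₁, v₂, v₃} :=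
    hcol.subset (Set.insert_subset h₁ (Set.insert_subset h₂ (Set.singleton_subset_iff.mpr h₃)))
  rcases hq.anisotropic.eq_or_eq_or_eq_of_collinear hcol₃ hd₁₂ hd₂₃ with h | h | h
  exacts [h12 h, h13 h, h23 h]
end
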